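/- arXiv:1410.0806 — 2 statements merged into one kernel-verified Lean document; each statement's English description precedes it below -/
import Mathlib

section
/- Let H be a Hilbert space, let v_1, ..., v_N be elements of H, and let 1 ≤ M ≤ N be integers. Then ‖∑_{n=1}^N v_n‖² ≤ 2(N/M) ∑_{n=1}^N ‖v_n‖² + 4(N/M) ∑_{m=1}^M |∑_{n=1}^{N-m} ⟨v_{n+m}, v_n⟩|. -/
/-!
Extend `v` by zero outside `[1, N]` to `u` and average over the `M` shifts: `M • ∑ u` is the sum
over `n < N + M` of the windows `w n = ∑_{m < M} u (n - m)` (truncated subtraction is harmless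
since `u 0 = 0`). Cauchy–Schwarz over these `N + M` windows and expanding `‖w n‖²` gives
`M² ‖∑ u‖² ≤ (N + M) ∑_{m, m' < M} |∑ₙ ⟪u (n - m), u (n - m')⟫|`, and the inner sum is the
autocorrelation of `u` at lag `|m - m'|`. Lag `0` occurs `M` times, contributing `M ∑ ‖u n‖²`,
and every other lag at most `2M` times; finally `N + M ≤ 2N`.
-/

open Finset
open scoped InnerProductSpace

theorem sum_comp_sub_eq_sum_Icc {A : Type*} [AddCommMonoid A] {f : ℕ → A} {K m : ℕ}
    {s : Finset ℕ} (hf : ∀ k ∉ Icc 1 K, f k = 0) (hs : Icc (m + 1) (m + K) ⊆ s) :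
    ∑ n ∈ s, f (n - m) = ∑ k ∈ Icc 1 K, f k := by
  rw [← sum_subset hs fun n _ hn => hf _ (by simp only [mem_Icc] at hn ⊢; omega),
    add_comm m 1, add_comm m K, ← map_add_right_Icc, sum_map]
  simp only [addRightEmbedding_apply, add_tsub_cancel_right]

theorem sum_range_sum_range_dist_le {c : ℕ → ℝ} (hc : ∀ h, 0 ≤ c h) (M : ℕ) :
    ∑ m ∈ range M, ∑ m' ∈ range M, c (Nat.dist m m') ≤ M * (c 0 + 2 * ∑ h ∈ Ico 1 M, c h) := by
  induction M with
  | zero => simp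
  | succ M ih =>
    have hshift : ∑ m ∈ range M, c (m + 1) = ∑ h ∈ Ico 1 (M + 1), c h := by
      rw [range_eq_Ico, sum_Ico_add']
    have hmono : ∑ h ∈ Ico 1 M, c h ≤ ∑ h ∈ Ico 1 (M + 1), c h :=
      sum_le_sum_of_subset_of_nonneg (Ico_subset_Ico_right M.le_succ) fun h _ _ => hc h
    simp only [sum_range_succ', Nat.dist_add_add_right, Nat.dist_zero_left, Nat.dist_zero_right,
      sum_add_distrib, hshift]
    push_cast
    nlinarith [mul_le_mul_of_nonneg_left hmono (Nat.cast_nonneg (α := ℝ) M), hc 0]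

section

variable {𝕜 E : Type*} [RCLike 𝕜] [NormedAddCommGroup E] [InnerProductSpace 𝕜 E]

theorem sum_norm_sum_sq_le {ι κ : Type*} (s : Finset ι) (t : Finset κ) (x : ι → κ → E) :
    ∑ i ∈ s, ‖∑ j ∈ t, x i j‖ ^ 2 ≤ ∑ j ∈ t, ∑ j' ∈ t, ‖∑ i ∈ s, ⟪x i j, x i j'⟫_𝕜‖ :=
  calc ∑ i ∈ s, ‖∑ j ∈ t, x i j‖ ^ 2
      = RCLike.re (∑ j ∈ t, ∑ j' ∈ t, ∑ i ∈ s, ⟪x i j, x i j'⟫_𝕜) := by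
        simp_rw [← inner_self_eq_norm_sq (𝕜 := 𝕜), sum_inner, inner_sum, map_sum]
        rw [sum_comm]
        exact sum_congr rfl fun j _ => sum_comm
    _ ≤ ‖∑ j ∈ t, ∑ j' ∈ t, ∑ i ∈ s, ⟪x i j, x i j'⟫_𝕜‖ := RCLike.re_le_norm _
    _ ≤ _ := (norm_sum_le _ _).trans (sum_le_sum fun j _ => norm_sum_le _ _)

variable (𝕜) in
def autocorrelation (u : ℕ → E) (N h : ℕ) : 𝕜 :=
  ∑ n ∈ Icc 1 (N - h), ⟪u (n + h), u n⟫_𝕜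

theorem norm_autocorrelation_zero (u : ℕ → E) (N : ℕ) :
    ‖autocorrelation 𝕜 u N 0‖ = ∑ n ∈ Icc 1 N, ‖u n‖ ^ 2 := by
  simp only [autocorrelation, Nat.sub_zero, add_zero, inner_self_eq_norm_sq_to_K]
  norm_cast
  exact abs_of_nonneg (sum_nonneg fun n _ => sq_nonneg _)

theorem autocorrelation_congr {u v : ℕ → E} {N : ℕ} (huv : ∀ n ∈ Icc 1 N, u n = v n) (h : ℕ) :
    autocorrelation 𝕜 u N h = autocorrelation 𝕜 v N h :=
  sum_congr rfl fun n hn => by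
    simp only [mem_Icc] at hn
    rw [huv n (by simp only [mem_Icc]; omega), huv (n + h) (by simp only [mem_Icc]; omega)]

section

variable {u : ℕ → E} {N : ℕ} {s : Finset ℕ}

theorem sum_inner_comp_sub_eq_autocorrelation (hu : ∀ k ∉ Icc 1 N, u k = 0) {m m' : ℕ}
    (hm : m' ≤ m) (hs : Icc (m + 1) (m + N) ⊆ s) :
    ∑ n ∈ s, ⟪u (n - m'), u (n - m)⟫_𝕜 = autocorrelation 𝕜 u N (m - m') := by
  have hu0 : u 0 = 0 := hu 0 (by simp)
  have hshift : ∀ n, ⟪u (n - m'), u (n - m)⟫_𝕜 = ⟪u (n - m + (m - m')), u (n - m)⟫_𝕜 := by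
    intro n
    rcases le_or_gt n m with hn | hn
    · simp [Nat.sub_eq_zero_of_le hn, hu0]
    · rw [show n - m + (m - m') = n - m' by omega]
  rw [sum_congr rfl fun n _ => hshift n]
  have hs_lag : Icc (m + 1) (m + (N - (m - m'))) ⊆ s :=
    (Icc_subset_Icc_right (by omega)).trans hs
  refine sum_comp_sub_eq_sum_Icc (f := fun k => ⟪u (k + (m - m')), u k⟫_𝕜) (fun k hk => ?_) hs_lag
  simp only [mem_Icc, not_and_or, not_le] at hk
  rcases hk with hk | hk
  · rw [hu k (by simp only [mem_Icc]; omega), inner_zero_right]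
  · rw [hu (k + (m - m')) (by simp only [mem_Icc]; omega), inner_zero_left]

theorem norm_sum_inner_comp_sub_eq_norm_autocorrelation (hu : ∀ k ∉ Icc 1 N, u k = 0) {m m' : ℕ}
    (hs : Icc (m + 1) (m + N) ⊆ s) (hs' : Icc (m' + 1) (m' + N) ⊆ s) :
    ‖∑ n ∈ s, ⟪u (n - m), u (n - m')⟫_𝕜‖ = ‖autocorrelation 𝕜 u N (Nat.dist m m')‖ := by
  rcases le_total m m' with h | h
  · rw [Nat.dist_eq_sub_of_le h, sum_inner_comp_sub_eq_autocorrelation hu h hs']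
  · rw [Nat.dist_eq_sub_of_le_right h, ← sum_inner_comp_sub_eq_autocorrelation hu h hs,
      ← RCLike.norm_conj, map_sum]
    simp only [inner_conj_symm]

end

theorem norm_sum_sq_le_autocorrelation (u : ℕ → E) {N M : ℕ} (hM : 0 < M)
    (hu : ∀ k ∉ Icc 1 N, u k = 0) :
    M * ‖∑ n ∈ Icc 1 N, u n‖ ^ 2 ≤
      (N + M) * (∑ n ∈ Icc 1 N, ‖u n‖ ^ 2 + 2 * ∑ h ∈ Ico 1 M, ‖autocorrelation 𝕜 u N h‖) := by
  set S := ∑ n ∈ Icc 1 N, u n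
  set B := ∑ n ∈ Icc 1 N, ‖u n‖ ^ 2 + 2 * ∑ h ∈ Ico 1 M, ‖autocorrelation 𝕜 u N h‖
  set w : ℕ → E := fun n => ∑ m ∈ range M, u (n - m)
  have hwindow : ∀ m ∈ range M, Icc (m + 1) (m + N) ⊆ range (N + M) := fun m hm k hk => by
    simp only [mem_range, mem_Icc] at hm hk ⊢
    omega
  have hw : ∑ n ∈ range (N + M), w n = M • S := by
    rw [sum_comm, sum_congr rfl fun m hm => sum_comp_sub_eq_sum_Icc hu (hwindow m hm),
      sum_const, card_range]
  have hcs : (M * ‖S‖) ^ 2 ≤ (N + M) * ∑ n ∈ range (N + M), ‖w n‖ ^ 2 :=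
    calc (M * ‖S‖) ^ 2 = ‖∑ n ∈ range (N + M), w n‖ ^ 2 := by
          rw [hw, RCLike.norm_nsmul 𝕜, nsmul_eq_mul]
      _ ≤ (∑ n ∈ range (N + M), ‖w n‖) ^ 2 := by gcongr; exact norm_sum_le _ _
      _ ≤ (N + M) * ∑ n ∈ range (N + M), ‖w n‖ ^ 2 := by
        simpa using sq_sum_le_card_mul_sum_sq (s := range (N + M)) (f := fun n => ‖w n‖)
  have hexpand : ∑ n ∈ range (N + M), ‖w n‖ ^ 2 ≤ M * B :=
    calc ∑ n ∈ range (N + M), ‖w n‖ ^ 2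
        ≤ ∑ m ∈ range M, ∑ m' ∈ range M, ‖∑ n ∈ range (N + M), ⟪u (n - m), u (n - m')⟫_𝕜‖ :=
          sum_norm_sum_sq_le _ _ _
      _ = ∑ m ∈ range M, ∑ m' ∈ range M, ‖autocorrelation 𝕜 u N (Nat.dist m m')‖ :=
          sum_congr rfl fun m hm => sum_congr rfl fun m' hm' =>
            norm_sum_inner_comp_sub_eq_norm_autocorrelation hu (hwindow m hm) (hwindow m' hm')
      _ ≤ M * (‖autocorrelation 𝕜 u N 0‖ + 2 * ∑ h ∈ Ico 1 M, ‖autocorrelation 𝕜 u N h‖) :=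
          sum_range_sum_range_dist_le (fun _ => norm_nonneg _) M
      _ = M * B := by rw [norm_autocorrelation_zero]
  have hMpos : (0 : ℝ) < M := by exact_mod_cast hM
  refine le_of_mul_le_mul_left ?_ hMpos
  calc (M : ℝ) * (M * ‖S‖ ^ 2) = (M * ‖S‖) ^ 2 := by ring
    _ ≤ (N + M) * ∑ n ∈ range (N + M), ‖w n‖ ^ 2 := hcs
    _ ≤ (N + M) * (M * B) := by gcongr
    _ = M * ((N + M) * B) := by ring

end

theorem vdC_hilbert_general {H : Type*} [NormedAddCommGroup H] [InnerProductSpace ℂ H]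
    (v : ℕ → H) (N M : ℕ) (hM : 1 ≤ M) (hMN : M ≤ N) :
    ‖∑ n ∈ Icc 1 N, v n‖ ^ 2 ≤
      2 * ((N : ℝ) / M) * ∑ n ∈ Icc 1 N, ‖v n‖ ^ 2 +
      4 * ((N : ℝ) / M) * ∑ m ∈ Icc 1 M,
        ‖∑ n ∈ Icc 1 (N - m), (inner ℂ (v (n + m)) (v n) : ℂ)‖ := by
  set u := (↑(Icc 1 N) : Set ℕ).indicator v
  have hu : ∀ k ∉ Icc 1 N, u k = 0 := fun k hk => Set.indicator_of_notMem (by rwa [mem_coe]) _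
  have huv : ∀ n ∈ Icc 1 N, u n = v n := fun n hn => Set.indicator_of_mem (mem_coe.2 hn) _
  have hvdC := norm_sum_sq_le_autocorrelation (𝕜 := ℂ) u hM hu
  have hnorm : ∑ n ∈ Icc 1 N, ‖u n‖ ^ 2 = ∑ n ∈ Icc 1 N, ‖v n‖ ^ 2 :=
    sum_congr rfl fun n hn => by rw [huv n hn]
  rw [sum_congr rfl huv, hnorm] at hvdC
  simp only [autocorrelation_congr huv] at hvdC
  have hIco :
      ∑ h ∈ Ico 1 M, ‖autocorrelation ℂ v N h‖ ≤ ∑ h ∈ Icc 1 M, ‖autocorrelation ℂ v N h‖ :=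
    sum_le_sum_of_subset_of_nonneg Ico_subset_Icc_self fun _ _ _ => norm_nonneg _
  have hNM : (N + M : ℝ) ≤ 2 * N := by norm_cast; omega
  have hMpos : (0 : ℝ) < M := by exact_mod_cast hM
  calc ‖∑ n ∈ Icc 1 N, v n‖ ^ 2 = M * ‖∑ n ∈ Icc 1 N, v n‖ ^ 2 / M := by field_simp
    _ ≤ (N + M) * (∑ n ∈ Icc 1 N, ‖v n‖ ^ 2 + 2 * ∑ h ∈ Ico 1 M, ‖autocorrelation ℂ v N h‖)
          / M := div_le_div_of_nonneg_right hvdC hMpos.le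
    _ ≤ 2 * N * (∑ n ∈ Icc 1 N, ‖v n‖ ^ 2 + 2 * ∑ h ∈ Icc 1 M, ‖autocorrelation ℂ v N h‖)
          / M := by gcongr
    _ = _ := by unfold autocorrelation; ring

theorem vdC_hilbert {H : Type*} [NormedAddCommGroup H] [InnerProductSpace ℂ H]
    [CompleteSpace H] (v : ℕ → H) (N M : ℕ) (hM : 1 ≤ M) (hMN : M ≤ N) :
    ‖∑ n ∈ Icc 1 N, v n‖ ^ 2 ≤
      2 * ((N : ℝ) / M) * ∑ n ∈ Icc 1 N, ‖v n‖ ^ 2 +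
      4 * ((N : ℝ) / M) * ∑ m ∈ Icc 1 M,
        ‖∑ n ∈ Icc 1 (N - m), (inner ℂ (v (n + m)) (v n) : ℂ)‖ :=
  vdC_hilbert_general v N M hM hMN
end

section
/- Let (X, μ, T) be a measure-preserving system, f ∈ L²(X, μ), N ≥ M ≥ 1 integers, and (c_n)_{n=1}^N complex numbers. Then ‖∑_{n=1}^N c_n (f ∘ T^n)‖²_{L²} ≤ 2(N/M) ∑_{n=1}^N |c_n|² ‖f‖²_{L²} + 4(N/M) ∑_{m=1}^M |∑_{n=1}^{N−m} c_{n+m} \overline{c_n}| · |⟨f ∘ T^m, f⟩_{L²}|. -/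
/-!
Extend `v n = c n • u n` by zero to `ℤ` and average it over windows of length `M`:
`M • ∑ v = ∑ⱼ ∑_{h < M} v (j + h)`, with at most `N + M ≤ 2N` windows `j`, so Cauchy–Schwarz gives
`M² ‖∑ v‖² ≤ 2N ∑ⱼ ‖∑ₕ v (j + h)‖²`. Expanding the squares, the pair `(h, h')` contributes the
lag-`(h - h')` correlation `R (h - h') = ∑ₙ ⟪v (n + h - h'), v n⟫`, and each lag occurs at most
`M` times; since `R (-k) = conj (R k)`, only the lags `0 ≤ k ≤ M` remain. Composition with `T` is
a linear isometry of `L²`, so for `u n = f ∘ T^[n]` the correlation `⟪u (n + m), u n⟫ = ⟪u m, u 0⟫`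
does not depend on `n`, and `R m` factors as `conj (∑ₙ c (n + m) * conj (c n)) * ⟪u m, u 0⟫`.
-/

open Finset MeasureTheory
open scoped InnerProductSpace ComplexConjugate

theorem Finset.sum_Icc_add' {α E : Type*} [AddCommMonoid E] [AddCommMonoid α] [PartialOrder α]
    [IsOrderedCancelAddMonoid α] [ExistsAddOfLE α] [LocallyFiniteOrder α]
    (f : α → E) (a b c : α) : ∑ x ∈ Icc a b, f (x + c) = ∑ x ∈ Icc (a + c) (b + c), f x := by
  rw [← map_add_right_Icc, sum_map]
  rfl

section Support

variable {E : Type*} [AddCommMonoid E] {f : ℤ → E} {N : ℤ}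

theorem sum_Icc_eq_of_support (hf : ∀ n ∉ Icc 1 N, f n = 0) {a b : ℤ} (ha : a ≤ 1)
    (hb : N ≤ b) : ∑ n ∈ Icc a b, f n = ∑ n ∈ Icc 1 N, f n :=
  (sum_subset (Icc_subset_Icc ha hb) fun n _ hn => hf n hn).symm

theorem sum_Icc_comp_add_of_support (hf : ∀ n ∉ Icc 1 N, f n = 0) {a b h : ℤ} (ha : a + h ≤ 1)
    (hb : N ≤ b + h) : ∑ j ∈ Icc a b, f (j + h) = ∑ n ∈ Icc 1 N, f n := by
  rw [sum_Icc_add']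
  exact sum_Icc_eq_of_support hf ha hb

theorem nsmul_sum_eq_sum_window (hf : ∀ n ∉ Icc 1 N, f n = 0) (M : ℕ) :
    M • ∑ n ∈ Icc 1 N, f n = ∑ j ∈ Icc (2 - M : ℤ) N, ∑ h ∈ Ico (0 : ℤ) M, f (j + h) := by
  rw [sum_comm]
  calc M • ∑ n ∈ Icc 1 N, f n = ∑ _h ∈ Ico (0 : ℤ) M, ∑ n ∈ Icc 1 N, f n := by simp
    _ = _ := sum_congr rfl fun h hh => by
        rw [mem_Ico] at hh
        exact (sum_Icc_comp_add_of_support hf (by omega) (by omega)).symm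

end Support

theorem norm_sum_sq_le_card_mul {ι E : Type*} [SeminormedAddCommGroup E] (s : Finset ι)
    (x : ι → E) : ‖∑ i ∈ s, x i‖ ^ 2 ≤ #s * ∑ i ∈ s, ‖x i‖ ^ 2 :=
  (pow_le_pow_left₀ (norm_nonneg _) (norm_sum_le _ _) 2).trans sq_sum_le_card_mul_sum_sq

theorem sum_Ioo_le_of_even {g : ℤ → ℝ} (hg : ∀ k, g (-k) = g k) (hg0 : ∀ k, 0 ≤ g k) (M : ℕ) :
    ∑ k ∈ Ioo (-(M : ℤ)) M, g k ≤ g 0 + 2 * ∑ m ∈ Icc 1 M, g m := by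
  set P : Finset ℤ := (Icc 1 M).map Nat.castEmbedding
  have hP : ∑ k ∈ P, g k = ∑ m ∈ Icc 1 M, g m := sum_map _ _ _
  have hnegP : ∑ k ∈ P.map (Equiv.neg ℤ).toEmbedding, g k = ∑ m ∈ Icc 1 M, g m := by
    simp only [P, sum_map]
    exact sum_congr rfl fun m _ => hg m
  have hcover : Ioo (-(M : ℤ)) M ⊆ insert 0 (P ∪ P.map (Equiv.neg ℤ).toEmbedding) := by
    intro k hk
    rw [mem_Ioo] at hk
    simp only [P, mem_insert, mem_union, mem_map, mem_Icc, Nat.castEmbedding_apply,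
      Equiv.coe_toEmbedding, Equiv.neg_apply]
    rcases lt_trichotomy k 0 with hk0 | rfl | hk0
    · exact Or.inr (Or.inr ⟨-k, ⟨(-k).toNat, by omega, by omega⟩, by omega⟩)
    · exact Or.inl rfl
    · exact Or.inr (Or.inl ⟨k.toNat, by omega, by omega⟩)
  have h0 : (0 : ℤ) ∉ P ∪ P.map (Equiv.neg ℤ).toEmbedding := by
    simp [P]
  have hdisj : Disjoint P (P.map (Equiv.neg ℤ).toEmbedding) := by
    rw [disjoint_left]
    simp only [P, mem_map, mem_Icc, Nat.castEmbedding_apply, Equiv.coe_toEmbedding,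
      Equiv.neg_apply]
    omega
  calc ∑ k ∈ Ioo (-(M : ℤ)) M, g k
      ≤ ∑ k ∈ insert 0 (P ∪ P.map (Equiv.neg ℤ).toEmbedding), g k :=
        sum_le_sum_of_subset_of_nonneg hcover fun k _ _ => hg0 k
    _ = g 0 + 2 * ∑ m ∈ Icc 1 M, g m := by
        rw [sum_insert h0, sum_union hdisj, hP, hnegP]; ring

theorem sum_Icc_int_ite_eq {E : Type*} [AddCommMonoid E] (φ : ℕ → E) (N m : ℕ) :
    ∑ n ∈ Icc (1 : ℤ) N, (if n + m ∈ Icc 1 (N : ℤ) then φ n.toNat else 0) =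
      ∑ n ∈ Icc 1 (N - m), φ n := by
  rw [← sum_filter]
  exact sum_nbij' Int.toNat (↑) (by simp; omega) (by simp; omega) (by simp; omega)
    (by simp) (by simp)

section HilbertSpace

variable {H : Type*} [NormedAddCommGroup H] [InnerProductSpace ℂ H]

noncomputable def lagCorrelation (v : ℤ → H) (N : ℕ) (k : ℤ) : ℂ :=
  ∑ n ∈ Icc 1 (N : ℤ), ⟪v (n + k), v n⟫_ℂ

theorem inner_comp_add_eq_zero_of_support {v : ℤ → H} {N : ℕ}
    (hv : ∀ n ∉ Icc 1 (N : ℤ), v n = 0) (k : ℤ) :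
    ∀ n ∉ Icc 1 (N : ℤ), ⟪v (n + k), v n⟫_ℂ = 0 := fun n hn => by
  rw [hv n hn, inner_zero_right]

theorem lagCorrelation_neg {v : ℤ → H} {N : ℕ} (hv : ∀ n ∉ Icc 1 (N : ℤ), v n = 0) (k : ℤ) :
    lagCorrelation v N (-k) = conj (lagCorrelation v N k) := by
  have hflip : ∀ n ∉ Icc 1 (N : ℤ), ⟪v n, v (n + k)⟫_ℂ = 0 := fun n hn => by
    rw [hv n hn, inner_zero_left]
  calc lagCorrelation v N (-k)
      = ∑ n ∈ Icc (1 - |k|) (N + |k|), ⟪v (n + -k), v n⟫_ℂ :=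
        (sum_Icc_eq_of_support (inner_comp_add_eq_zero_of_support hv (-k))
          (by simp) (by simp)).symm
    _ = ∑ n ∈ Icc (1 - |k|) (N + |k|), ⟪v (n + -k), v (n + -k + k)⟫_ℂ := by
        simp only [neg_add_cancel_right]
    _ = ∑ n ∈ Icc 1 (N : ℤ), ⟪v n, v (n + k)⟫_ℂ :=
        sum_Icc_comp_add_of_support (f := fun n => ⟪v n, v (n + k)⟫_ℂ) hflip
          (by linarith [neg_le_abs k]) (by linarith [le_abs_self k])
    _ = conj (lagCorrelation v N k) := by
        simp only [lagCorrelation, map_sum, inner_conj_symm]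

theorem sum_inner_window_eq_lagCorrelation {v : ℤ → H} {N : ℕ}
    (hv : ∀ n ∉ Icc 1 (N : ℤ), v n = 0) {M : ℕ}
    (h : ℤ) {h' : ℤ} (hh' : h' ∈ Ico (0 : ℤ) M) :
    ∑ j ∈ Icc (2 - M : ℤ) N, ⟪v (j + h), v (j + h')⟫_ℂ = lagCorrelation v N (h - h') := by
  rw [mem_Ico] at hh'
  rw [lagCorrelation, ← sum_Icc_comp_add_of_support (inner_comp_add_eq_zero_of_support hv _)
    (a := 2 - M) (b := N) (h := h') (by omega) (by omega)]
  simp only [add_add_sub_cancel]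

theorem sum_norm_sq_window_le {v : ℤ → H} {N : ℕ} (hv : ∀ n ∉ Icc 1 (N : ℤ), v n = 0) (M : ℕ) :
    ∑ j ∈ Icc (2 - M : ℤ) N, ‖∑ h ∈ Ico (0 : ℤ) M, v (j + h)‖ ^ 2 ≤
      M * ∑ k ∈ Ioo (-(M : ℤ)) M, ‖lagCorrelation v N k‖ := by
  have hlag : ∀ h' ∈ Ico (0 : ℤ) M,
      ∑ h ∈ Ico (0 : ℤ) M, ‖lagCorrelation v N (h - h')‖ ≤
        ∑ k ∈ Ioo (-(M : ℤ)) M, ‖lagCorrelation v N k‖ := fun h' hh' => by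
    rw [mem_Ico] at hh'
    simp_rw [sub_eq_add_neg]
    rw [sum_Ico_add' (fun k => ‖lagCorrelation v N k‖)]
    refine sum_le_sum_of_subset_of_nonneg (fun k hk => ?_) fun _ _ _ => norm_nonneg _
    simp only [mem_Ico, mem_Ioo] at hk ⊢
    omega
  calc ∑ j ∈ Icc (2 - M : ℤ) N, ‖∑ h ∈ Ico (0 : ℤ) M, v (j + h)‖ ^ 2
      = RCLike.re (∑ h' ∈ Ico (0 : ℤ) M, ∑ h ∈ Ico (0 : ℤ) M,
          ∑ j ∈ Icc (2 - M : ℤ) N, ⟪v (j + h), v (j + h')⟫_ℂ) := by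
        simp only [← inner_self_eq_norm_sq (𝕜 := ℂ), sum_inner, inner_sum, ← map_sum]
        rw [sum_comm]
        exact congrArg _ (sum_congr rfl fun h' _ => sum_comm)
    _ = RCLike.re (∑ h' ∈ Ico (0 : ℤ) M, ∑ h ∈ Ico (0 : ℤ) M, lagCorrelation v N (h - h')) := by
        congr 1
        exact sum_congr rfl fun h' hh' =>
          sum_congr rfl fun h _ => sum_inner_window_eq_lagCorrelation hv h hh'
    _ ≤ ∑ h' ∈ Ico (0 : ℤ) M, ∑ h ∈ Ico (0 : ℤ) M, ‖lagCorrelation v N (h - h')‖ := by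
        simp only [map_sum]
        exact sum_le_sum fun h' _ => sum_le_sum fun h _ => RCLike.re_le_norm _
    _ ≤ ∑ _h' ∈ Ico (0 : ℤ) M, ∑ k ∈ Ioo (-(M : ℤ)) M, ‖lagCorrelation v N k‖ :=
        sum_le_sum hlag
    _ = M * ∑ k ∈ Ioo (-(M : ℤ)) M, ‖lagCorrelation v N k‖ := by simp

theorem sq_mul_norm_sum_sq_le {v : ℤ → H} {N : ℕ} (hv : ∀ n ∉ Icc 1 (N : ℤ), v n = 0) (M : ℕ) :
    (M : ℝ) ^ 2 * ‖∑ n ∈ Icc 1 (N : ℤ), v n‖ ^ 2 ≤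
      (N + M) * (M * ∑ k ∈ Ioo (-(M : ℤ)) M, ‖lagCorrelation v N k‖) := by
  have hcard : (#(Icc (2 - M : ℤ) N) : ℝ) ≤ N + M := by
    rw [Int.card_Icc]
    exact_mod_cast (by omega : (N + 1 - (2 - M : ℤ)).toNat ≤ N + M)
  calc (M : ℝ) ^ 2 * ‖∑ n ∈ Icc 1 (N : ℤ), v n‖ ^ 2
      = ‖∑ j ∈ Icc (2 - M : ℤ) N, ∑ h ∈ Ico (0 : ℤ) M, v (j + h)‖ ^ 2 := by
        rw [← nsmul_sum_eq_sum_window hv, RCLike.norm_nsmul ℂ, nsmul_eq_mul]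
        ring
    _ ≤ #(Icc (2 - M : ℤ) N) * ∑ j ∈ Icc (2 - M : ℤ) N, ‖∑ h ∈ Ico (0 : ℤ) M, v (j + h)‖ ^ 2 :=
        norm_sum_sq_le_card_mul _ _
    _ ≤ (N + M) * (M * ∑ k ∈ Ioo (-(M : ℤ)) M, ‖lagCorrelation v N k‖) :=
        mul_le_mul hcard (sum_norm_sq_window_le hv M) (by positivity) (by positivity)

theorem norm_sum_sq_le_lagCorrelation {v : ℤ → H} {N M : ℕ}
    (hv : ∀ n ∉ Icc 1 (N : ℤ), v n = 0) (hM : 1 ≤ M) (hMN : M ≤ N) :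
    ‖∑ n ∈ Icc 1 (N : ℤ), v n‖ ^ 2 ≤
      2 * ((N : ℝ) / M) * ‖lagCorrelation v N 0‖ +
        4 * ((N : ℝ) / M) * ∑ m ∈ Icc 1 M, ‖lagCorrelation v N m‖ := by
  have hsym : ∑ k ∈ Ioo (-(M : ℤ)) M, ‖lagCorrelation v N k‖ ≤
      ‖lagCorrelation v N 0‖ + 2 * ∑ m ∈ Icc 1 M, ‖lagCorrelation v N m‖ :=
    sum_Ioo_le_of_even (fun k => by rw [lagCorrelation_neg hv, Complex.norm_conj])
      (fun _ => norm_nonneg _) M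
  have hM0 : (0 : ℝ) < M := by exact_mod_cast hM
  have hNM : (N : ℝ) + M ≤ 2 * N := by
    have : (M : ℝ) ≤ N := by exact_mod_cast hMN
    linarith
  have key := (sq_mul_norm_sum_sq_le hv M).trans
    (mul_le_mul hNM (mul_le_mul_of_nonneg_left hsym hM0.le) (by positivity) (by positivity))
  have hrhs : 2 * ((N : ℝ) / M) * ‖lagCorrelation v N 0‖ +
      4 * ((N : ℝ) / M) * ∑ m ∈ Icc 1 M, ‖lagCorrelation v N m‖ =
      2 * N * (M * (‖lagCorrelation v N 0‖ + 2 * ∑ m ∈ Icc 1 M, ‖lagCorrelation v N m‖)) /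
        M ^ 2 := by
    field_simp
    ring
  rw [hrhs, le_div_iff₀ (by positivity)]
  linarith

theorem norm_sum_smul_sq_le_of_stationary (u : ℕ → H)
    (hu : ∀ m n, ⟪u (n + m), u n⟫_ℂ = ⟪u m, u 0⟫_ℂ) (c : ℕ → ℂ) {N M : ℕ} (hM : 1 ≤ M)
    (hMN : M ≤ N) :
    ‖∑ n ∈ Icc 1 N, c n • u n‖ ^ 2 ≤
      2 * ((N : ℝ) / M) * (∑ n ∈ Icc 1 N, ‖c n‖ ^ 2) * ‖u 0‖ ^ 2 +
        4 * ((N : ℝ) / M) * ∑ m ∈ Icc 1 M,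
          ‖∑ n ∈ Icc 1 (N - m), c (n + m) * conj (c n)‖ * ‖⟪u m, u 0⟫_ℂ‖ := by
  set v : ℤ → H := fun n => if n ∈ Icc 1 (N : ℤ) then c n.toNat • u n.toNat else 0 with hv_def
  have hv : ∀ n ∉ Icc 1 (N : ℤ), v n = 0 := fun n hn => if_neg hn
  have hS : ∑ n ∈ Icc 1 (N : ℤ), v n = ∑ n ∈ Icc 1 N, c n • u n := by
    simpa [v] using sum_Icc_int_ite_eq (fun n => c n • u n) N 0
  have hR : ∀ m : ℕ, lagCorrelation v N m =
      conj (∑ n ∈ Icc 1 (N - m), c (n + m) * conj (c n)) * ⟪u m, u 0⟫_ℂ := by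
    intro m
    have hterm : ∀ n ∈ Icc 1 (N : ℤ), ⟪v (n + m), v n⟫_ℂ =
        if n + m ∈ Icc 1 (N : ℤ) then conj (c (n.toNat + m)) * c n.toNat * ⟪u m, u 0⟫_ℂ
        else 0 := by
      intro n hn
      have htoNat : (n + m).toNat = n.toNat + m := by rw [mem_Icc] at hn; omega
      split_ifs with hnm
      · rw [hv_def]
        simp only [if_pos hn, if_pos hnm, htoNat, inner_smul_left, inner_smul_right, hu]
        ring
      · rw [hv _ hnm, inner_zero_left]
    rw [lagCorrelation, sum_congr rfl hterm,
      sum_Icc_int_ite_eq (fun k => conj (c (k + m)) * c k * ⟪u m, u 0⟫_ℂ)]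
    simp only [map_sum, map_mul, Complex.conj_conj, sum_mul]
  have hR0 : ‖lagCorrelation v N 0‖ ≤ (∑ n ∈ Icc 1 N, ‖c n‖ ^ 2) * ‖u 0‖ ^ 2 := by
    rw [← Nat.cast_zero, hR, norm_mul, Complex.norm_conj, sq ‖u 0‖]
    gcongr
    · refine (norm_sum_le _ _).trans (le_of_eq (sum_congr rfl fun n _ => ?_))
      simp [sq]
    · exact norm_inner_le_norm _ _
  calc ‖∑ n ∈ Icc 1 N, c n • u n‖ ^ 2
      ≤ 2 * ((N : ℝ) / M) * ‖lagCorrelation v N 0‖ +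
          4 * ((N : ℝ) / M) * ∑ m ∈ Icc 1 M, ‖lagCorrelation v N m‖ := by
        rw [← hS]
        exact norm_sum_sq_le_lagCorrelation hv hM hMN
    _ ≤ _ := by
        simp only [hR, norm_mul, Complex.norm_conj] at hR0 ⊢
        rw [mul_assoc _ (∑ n ∈ Icc 1 N, ‖c n‖ ^ 2)]
        gcongr

end HilbertSpace

section L2

variable {X : Type*} [MeasurableSpace X] {μ : Measure X}

theorem MeasureTheory.L2.inner_eq_integral_of_ae_eq {F G : Lp ℂ 2 μ} {f g : X → ℂ}
    (hF : F =ᵐ[μ] f) (hG : G =ᵐ[μ] g) : ⟪F, G⟫_ℂ = ∫ x, conj (f x) * g x ∂μ := by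
  rw [L2.inner_def]
  refine integral_congr_ae ?_
  filter_upwards [hF, hG] with x hFx hGx
  rw [hFx, hGx, RCLike.inner_apply, mul_comm]

theorem MeasureTheory.L2.norm_sq_eq_integral_of_ae_eq {F : Lp ℂ 2 μ} {f : X → ℂ}
    (hF : F =ᵐ[μ] f) : ‖F‖ ^ 2 = ∫ x, ‖f x‖ ^ 2 ∂μ := by
  rw [← inner_self_eq_norm_sq (𝕜 := ℂ), L2.inner_eq_integral_of_ae_eq hF hF]
  simp_rw [Complex.conj_mul', ← Complex.ofReal_pow]
  rw [integral_complex_ofReal, RCLike.re_to_complex, Complex.ofReal_re]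

theorem MeasureTheory.Lp.coeFn_sum_smul_of_ae_eq {ι : Type*} (s : Finset ι) (c : ι → ℂ)
    {F : ι → Lp ℂ 2 μ} {f : ι → X → ℂ} (hF : ∀ i ∈ s, F i =ᵐ[μ] f i) :
    ⇑(∑ i ∈ s, c i • F i) =ᵐ[μ] fun x => ∑ i ∈ s, c i * f i x := by
  have hsmul : ∀ᵐ x ∂μ, ∀ i ∈ s, (c i • F i) x = c i * f i x := by
    rw [Filter.eventually_all_finset]
    intro i hi
    filter_upwards [Lp.coeFn_smul (c i) (F i), hF i hi] with x hx hFx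
    rw [hx, Pi.smul_apply, hFx, smul_eq_mul]
  filter_upwards [Lp.coeFn_fun_finsetSum s (fun i => c i • F i), hsmul] with x hx hsx
  rw [hx]
  exact sum_congr rfl hsx

theorem MeasureTheory.Lp.coeFn_compMeasurePreservingₗᵢ_pow_toLp {T : X → X}
    (hT : MeasurePreserving T μ μ) {f : X → ℂ} (hf : MemLp f 2 μ) (n : ℕ) :
    ((compMeasurePreservingₗᵢ ℂ T hT) ^ n) (hf.toLp f) =ᵐ[μ] fun x => f (T^[n] x) := by
  rw [LinearIsometry.coe_pow]
  change (compMeasurePreserving T hT)^[n] _ =ᵐ[μ] _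
  rw [compMeasurePreserving_iterate, toLp_compMeasurePreserving]
  exact MemLp.coeFn_toLp _

end L2

theorem vdC_mps_general {X : Type*} [MeasurableSpace X] (μ : Measure X)
    (T : X → X) (hT : MeasurePreserving T μ μ)
    (f : X → ℂ) (hf : MemLp f 2 μ) (N M : ℕ) (hM : 1 ≤ M) (hMN : M ≤ N) (c : ℕ → ℂ) :
    ∫ x, ‖∑ n ∈ Icc 1 N, c n * f (T^[n] x)‖ ^ 2 ∂μ ≤
      2 * ((N : ℝ) / M) * (∑ n ∈ Icc 1 N, ‖c n‖ ^ 2) * (∫ x, ‖f x‖ ^ 2 ∂μ) +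
      4 * ((N : ℝ) / M) * ∑ m ∈ Icc 1 M,
        ‖∑ n ∈ Icc 1 (N - m), c (n + m) * (starRingEnd ℂ) (c n)‖ *
          ‖∫ x, f (T^[m] x) * (starRingEnd ℂ) (f x) ∂μ‖ := by
  set U := Lp.compMeasurePreservingₗᵢ (E := ℂ) (p := 2) ℂ T hT
  set u : ℕ → Lp ℂ 2 μ := fun n => (U ^ n) (hf.toLp f)
  have hu : ∀ n, u n =ᵐ[μ] fun x => f (T^[n] x) :=
    Lp.coeFn_compMeasurePreservingₗᵢ_pow_toLp hT hf
  have hu0 : u 0 =ᵐ[μ] f := by simpa using hu 0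
  have hstat : ∀ m n, ⟪u (n + m), u n⟫_ℂ = ⟪u m, u 0⟫_ℂ := fun m n => by
    simp only [u, pow_add, LinearIsometry.coe_mul, Function.comp_apply,
      LinearIsometry.inner_map_map, pow_zero, LinearIsometry.coe_one, id]
  have hcorr : ∀ m, ‖⟪u m, u 0⟫_ℂ‖ = ‖∫ x, f (T^[m] x) * conj (f x) ∂μ‖ := fun m => by
    rw [norm_inner_symm, L2.inner_eq_integral_of_ae_eq hu0 (hu m)]
    simp only [mul_comm]
  rw [← L2.norm_sq_eq_integral_of_ae_eq (Lp.coeFn_sum_smul_of_ae_eq _ c fun n _ => hu n),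
    ← L2.norm_sq_eq_integral_of_ae_eq hu0]
  simp only [← hcorr]
  exact norm_sum_smul_sq_le_of_stationary u hstat c hM hMN

theorem vdC_mps {X : Type*} [MeasurableSpace X] (μ : Measure X) [IsProbabilityMeasure μ]
    (T : X → X) (hT : MeasurePreserving T μ μ)
    (f : X → ℂ) (hf : MemLp f 2 μ) (N M : ℕ) (hM : 1 ≤ M) (hMN : M ≤ N) (c : ℕ → ℂ) :
    ∫ x, ‖∑ n ∈ Icc 1 N, c n * f (T^[n] x)‖ ^ 2 ∂μ ≤
      2 * ((N : ℝ) / M) * (∑ n ∈ Icc 1 N, ‖c n‖ ^ 2) * (∫ x, ‖f x‖ ^ 2 ∂μ) +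
      4 * ((N : ℝ) / M) * ∑ m ∈ Icc 1 M,
        ‖∑ n ∈ Icc 1 (N - m), c (n + m) * (starRingEnd ℂ) (c n)‖ *
          ‖∫ x, f (T^[m] x) * (starRingEnd ℂ) (f x) ∂μ‖ :=
  vdC_mps_general μ T hT f hf N M hM hMN c
end
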